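/- arXiv:1401.0793 — 5 statements merged into one kernel-verified Lean document; each statement's English description precedes it below -/
import Mathlib

section
/- In the first Weyl algebra A_1 over a field k of characteristic 0 (generated by x, y with yx = xy + 1), every element can be written as ya - ay for some a in A_1. Consequently, any additive map tr: A_1 -> B to a k-algebra B satisfying tr(ab) = tr(ba) for all a, b is identically zero. -/
/-- The defining relation of the first Weyl algebra: `y * x = x * y + 1`. -/
inductive WeylRel (k : Type*) [Field k] :
    FreeAlgebra k (Fin 2) → FreeAlgebra k (Fin 2) → Prop
  | rel : WeylRel k (FreeAlgebra.ι k 1 * FreeAlgebra.ι k 0)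
      (FreeAlgebra.ι k 0 * FreeAlgebra.ι k 1 + 1)

/-- The first Weyl algebra `A₁ = k⟨x,y⟩/(yx - xy - 1)`. -/
abbrev WeylAlgebra (k : Type*) [Field k] := RingQuot (WeylRel k)

/-- The generator `x` of the first Weyl algebra. -/
noncomputable def weylX (k : Type*) [Field k] : WeylAlgebra k :=
  RingQuot.mkAlgHom k (WeylRel k) (FreeAlgebra.ι k 0)

/-- The generator `y` of the first Weyl algebra. -/
noncomputable def weylY (k : Type*) [Field k] : WeylAlgebra k :=
  RingQuot.mkAlgHom k (WeylRel k) (FreeAlgebra.ι k 1)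

section Aux

variable (k : Type*) [Field k]

lemma weyl_rel : weylY k * weylX k = weylX k * weylY k + 1 := by
  have h := RingQuot.mkAlgHom_rel k (WeylRel.rel (k := k))
  simpa [weylX, weylY, map_mul, map_add, map_one] using h

local notation "X" => weylX k
local notation "Y" => weylY k

lemma weyl_y_xpow (n : ℕ) :
    Y * X ^ (n + 1) = X ^ (n + 1) * Y + (n + 1) • X ^ n := by
  induction n with
  | zero => simpa using weyl_rel k
  | succ n ih =>
    have h1 : Y * X ^ (n + 2) = (Y * X ^ (n + 1)) * X := by
      rw [mul_assoc, ← pow_succ]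
    rw [h1, ih, add_mul, mul_assoc, weyl_rel k, smul_mul_assoc, ← pow_succ,
      mul_add, ← mul_assoc, ← pow_succ, mul_one, succ_nsmul (X ^ (n + 1)) (n + 1)]
    abel

lemma weyl_ypow_x (m : ℕ) :
    Y ^ (m + 1) * X = X * Y ^ (m + 1) + (m + 1) • Y ^ m := by
  induction m with
  | zero => simpa using weyl_rel k
  | succ m ih =>
    have h1 : Y ^ (m + 2) * X = Y * (Y ^ (m + 1) * X) := by
      rw [← mul_assoc, ← pow_succ']
    rw [h1, ih, mul_add, ← mul_assoc, weyl_rel k, mul_smul_comm, ← pow_succ',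
      add_mul, one_mul, mul_assoc, ← pow_succ', succ_nsmul (Y ^ (m + 1)) (m + 1)]
    abel

/-- the span of the monomials `x^n y^m` -/
noncomputable def weylSpan : Submodule k (WeylAlgebra k) :=
  Submodule.span k (Set.range fun p : ℕ × ℕ => X ^ p.1 * Y ^ p.2)

lemma mono_mem (n m : ℕ) : X ^ n * Y ^ m ∈ weylSpan k :=
  Submodule.subset_span ⟨(n, m), rfl⟩

lemma mulY_mem {z : WeylAlgebra k} (hz : z ∈ weylSpan k) : z * Y ∈ weylSpan k := by
  induction hz using Submodule.span_induction with
  | mem w hw =>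
    obtain ⟨⟨n, m⟩, rfl⟩ := hw
    simpa [mul_assoc, ← pow_succ] using mono_mem k n (m + 1)
  | zero => simpa using (weylSpan k).zero_mem
  | add a b _ _ ha hb => simpa [add_mul] using (weylSpan k).add_mem ha hb
  | smul c a _ ha => simpa [smul_mul_assoc] using (weylSpan k).smul_mem c ha

lemma mulX_mem {z : WeylAlgebra k} (hz : z ∈ weylSpan k) : z * X ∈ weylSpan k := by
  induction hz using Submodule.span_induction with
  | mem w hw =>
    obtain ⟨⟨n, m⟩, rfl⟩ := hw
    match m with
    | 0 => simpa [← pow_succ] using mono_mem k (n + 1) 0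
    | m + 1 =>
      have : X ^ n * Y ^ (m + 1) * X
          = X ^ (n + 1) * Y ^ (m + 1) + (m + 1) • (X ^ n * Y ^ m) := by
        rw [mul_assoc, weyl_ypow_x, mul_add, ← mul_assoc, ← pow_succ, mul_smul_comm]
      rw [this]
      exact (weylSpan k).add_mem (mono_mem k (n + 1) (m + 1))
        (Submodule.smul_of_tower_mem _ (m + 1) (mono_mem k n m))
  | zero => simpa using (weylSpan k).zero_mem
  | add a b _ _ ha hb => simpa [add_mul] using (weylSpan k).add_mem ha hb
  | smul c a _ ha => simpa [smul_mul_assoc] using (weylSpan k).smul_mem c ha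

lemma weylSpan_mul_mem {z w : WeylAlgebra k} (hz : z ∈ weylSpan k) (hw : w ∈ weylSpan k) :
    z * w ∈ weylSpan k := by
  induction hw using Submodule.span_induction with
  | mem w hw =>
    obtain ⟨⟨n, m⟩, rfl⟩ := hw
    have hXpow : ∀ c : ℕ, ∀ z ∈ weylSpan k, z * X ^ c ∈ weylSpan k := by
      intro c
      induction c with
      | zero => intro z hz; simpa using hz
      | succ c ih =>
        intro z hz
        have h2 : z * X ^ (c + 1) = (z * X ^ c) * X := by rw [mul_assoc, ← pow_succ]
        rw [h2]; exact mulX_mem k (ih z hz)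
    have hYpow : ∀ c : ℕ, ∀ z ∈ weylSpan k, z * Y ^ c ∈ weylSpan k := by
      intro c
      induction c with
      | zero => intro z hz; simpa using hz
      | succ c ih =>
        intro z hz
        have h2 : z * Y ^ (c + 1) = (z * Y ^ c) * Y := by rw [mul_assoc, ← pow_succ]
        rw [h2]; exact mulY_mem k (ih z hz)
    rw [← mul_assoc]
    exact hYpow m _ (hXpow n _ hz)
  | zero => simpa using (weylSpan k).zero_mem
  | add u v _ _ hu hv => simpa [mul_add] using (weylSpan k).add_mem hu hv
  | smul c u _ hu => simpa [mul_smul_comm] using (weylSpan k).smul_mem c hu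

lemma mem_weylSpan (z : WeylAlgebra k) : z ∈ weylSpan k := by
  obtain ⟨w, rfl⟩ := RingQuot.mkAlgHom_surjective k (WeylRel k) z
  induction w using FreeAlgebra.induction with
  | grade0 c =>
    rw [AlgHom.commutes, Algebra.algebraMap_eq_smul_one]
    have h1 : (1 : WeylAlgebra k) = X ^ 0 * Y ^ 0 := by simp
    rw [h1]
    exact (weylSpan k).smul_mem c (mono_mem k 0 0)
  | grade1 i =>
    fin_cases i
    · simpa [weylX] using (by simpa using mono_mem k 1 0 : X ∈ weylSpan k)
    · simpa [weylY] using (by simpa using mono_mem k 0 1 : Y ∈ weylSpan k)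
  | mul a b ha hb =>
    rw [map_mul]
    exact weylSpan_mul_mem k ha hb
  | add a b ha hb => rw [map_add]; exact (weylSpan k).add_mem ha hb

variable [CharZero k]

lemma weyl_comm_surj (z : WeylAlgebra k) : ∃ a : WeylAlgebra k, z = Y * a - a * Y := by
  let D : WeylAlgebra k →ₗ[k] WeylAlgebra k :=
    LinearMap.mulLeft k Y - LinearMap.mulRight k Y
  have hD : ∀ a, D a = Y * a - a * Y := fun a => rfl
  have hz : z ∈ LinearMap.range D := by
    have hle : weylSpan k ≤ LinearMap.range D := by
      rw [weylSpan, Submodule.span_le]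
      rintro _ ⟨⟨n, m⟩, rfl⟩
      show X ^ n * Y ^ m ∈ LinearMap.range D
      refine ⟨((n : k) + 1)⁻¹ • (X ^ (n + 1) * Y ^ m), ?_⟩
      have hcomm : Y * (X ^ (n + 1) * Y ^ m) - (X ^ (n + 1) * Y ^ m) * Y
          = (n + 1) • (X ^ n * Y ^ m) := by
        rw [← mul_assoc, weyl_y_xpow, add_mul, mul_assoc, ← pow_succ',
          smul_mul_assoc, mul_assoc, ← pow_succ]
        abel
      have hne : ((n : k) + 1) ≠ 0 := Nat.cast_add_one_ne_zero n
      have h3 := congrArg (fun t => ((n : k) + 1)⁻¹ • t) hcomm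
      simp only [smul_sub] at h3
      rw [hD, mul_smul_comm, smul_mul_assoc, h3,
        ← Nat.cast_smul_eq_nsmul k (n + 1) (X ^ n * Y ^ m)]
      push_cast
      rw [inv_smul_smul₀ hne]
    exact hle (mem_weylSpan k z)
  obtain ⟨a, ha⟩ := hz
  exact ⟨a, by rw [← ha, hD]⟩

end Aux

/-- in the first Weyl algebra over a field of characteristic `0`, every element
is a commutator `y * a - a * y`; consequently every additive map `tr : A₁ → B` to a
`k`-algebra `B` with `tr (a*b) = tr (b*a)` is identically zero. -/
theorem weylAlgebra_no_trace (k : Type*) [Field k] [CharZero k]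
    (B : Type*) [Ring B] [Algebra k B] :
    (∀ z : WeylAlgebra k, ∃ a : WeylAlgebra k, z = weylY k * a - a * weylY k) ∧
    (∀ tr : WeylAlgebra k →+ B,
      (∀ a b : WeylAlgebra k, tr (a * b) = tr (b * a)) → tr = 0) := by
  refine ⟨weyl_comm_surj k, fun tr htr => ?_⟩
  ext z
  obtain ⟨a, rfl⟩ := weyl_comm_surj k z
  simp [map_sub, htr]
end

section
/- Every graded algebra automorphism of k_{-1}[x_1,...,x_n] (over a field k, char k ≠ 2, n ≥ 2) is of the form x_i -> r_i x_{σ(i)} for a permutation σ in S_n and scalars r_i in k^×; thus the graded automorphism group is S_n ⋉ (k^×)^n. -/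
/-- The defining relations of the `(-1)`-quantum Weyl algebra `V_n(𝒜)`:
`x_i x_j + x_j x_i = a_{ij}` for `i < j`. -/
inductive VnRel (k : Type*) [CommRing k] (n : ℕ) (a : Fin n → Fin n → k) :
    FreeAlgebra k (Fin n) → FreeAlgebra k (Fin n) → Prop
  | rel (i j : Fin n) (h : i < j) :
      VnRel k n a
        (FreeAlgebra.ι k i * FreeAlgebra.ι k j + FreeAlgebra.ι k j * FreeAlgebra.ι k i)
        (algebraMap k (FreeAlgebra k (Fin n)) (a i j))

/-- The `(-1)`-quantum Weyl algebra `V_n(𝒜) = k⟨x₁,…,xₙ⟩/(xᵢxⱼ + xⱼxᵢ - a_{ij}, i < j)`. -/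
abbrev Vn (k : Type*) [CommRing k] (n : ℕ) (a : Fin n → Fin n → k) := RingQuot (VnRel k n a)

/-- The generators `x_i` of `V_n(𝒜)`. -/
noncomputable def VnX (k : Type*) [CommRing k] (n : ℕ) (a : Fin n → Fin n → k) (i : Fin n) :
    Vn k n a :=
  RingQuot.mkAlgHom k (VnRel k n a) (FreeAlgebra.ι k i)

/-- The "evaluation at the `l`-th coordinate" algebra map `Vn k n 0 →ₐ[k] k`,
sending `x_m ↦ δ_{ml}`. -/
noncomputable def VnChi (k : Type*) [CommRing k] (n : ℕ) (l : Fin n) :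
    Vn k n 0 →ₐ[k] k :=
  RingQuot.liftAlgHom k
    ⟨FreeAlgebra.lift k (fun m => if m = l then (1 : k) else 0), by
      rintro x y ⟨i, j, hij⟩
      have hne : i ≠ j := hij.ne
      by_cases hi : i = l <;> by_cases hj : j = l <;>
        simp [hi, hj] <;> simp_all⟩

theorem VnChi_X (k : Type*) [CommRing k] (n : ℕ) (l m : Fin n) :
    VnChi k n l (VnX k n 0 m) = if m = l then (1 : k) else 0 := by
  rw [VnChi, VnX, RingQuot.liftAlgHom_mkAlgHom_apply, FreeAlgebra.lift_ι_apply]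

theorem VnX_anticomm (k : Type*) [CommRing k] (n : ℕ) {i j : Fin n} (h : i ≠ j) :
    VnX k n 0 i * VnX k n 0 j + VnX k n 0 j * VnX k n 0 i = 0 := by
  rcases h.lt_or_gt with hlt | hlt
  · have := RingQuot.mkAlgHom_rel k (VnRel.rel (a := (0 : Fin n → Fin n → k)) i j hlt)
    simpa [VnX] using this
  · have := RingQuot.mkAlgHom_rel k (VnRel.rel (a := (0 : Fin n → Fin n → k)) j i hlt)
    have h2 : VnX k n 0 j * VnX k n 0 i + VnX k n 0 i * VnX k n 0 j = 0 := by
      simpa [VnX] using this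
    rw [add_comm] at h2
    exact h2

/-- Any element of the span of the generators is determined by its `χ`-coordinates. -/
theorem Vn_span_repr (k : Type*) [CommRing k] (n : ℕ) {v : Vn k n 0}
    (hv : v ∈ Submodule.span k (Set.range (VnX k n 0))) :
    v = ∑ l, VnChi k n l v • VnX k n 0 l := by
  rw [Submodule.mem_span_range_iff_exists_fun] at hv
  obtain ⟨c, hc⟩ := hv
  have hcoef : ∀ l, VnChi k n l v = c l := by
    intro l
    rw [← hc, map_sum]
    simp_rw [map_smul, VnChi_X, smul_eq_mul]
    rw [Finset.sum_eq_single l (fun b _ hb => by simp [hb]) (by simp)]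
    simp
  simp_rw [hcoef]
  exact hc.symm

/-- every graded algebra automorphism of `k₋₁[x₁,…,xₙ]` (over a field `k` with
`char k ≠ 2`, `n ≥ 2`) — i.e. every algebra automorphism `g` such that `g` and `g⁻¹`
preserve the degree-one part `span{x₁,…,xₙ}` — is of the form `xᵢ ↦ rᵢ x_{σ(i)}` for a
permutation `σ ∈ Sₙ` and scalars `rᵢ ∈ kˣ`; thus the graded automorphism group is
`Sₙ ⋉ (kˣ)ⁿ`. -/
theorem graded_automorphisms_of_skew_polynomial_ring (k : Type*) [Field k]
    (hchar : ringChar k ≠ 2) (n : ℕ) (hn : 2 ≤ n)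
    (g : Vn k n 0 ≃ₐ[k] Vn k n 0)
    (hg : ∀ i, g (VnX k n 0 i) ∈ Submodule.span k (Set.range (VnX k n 0)))
    (hg' : ∀ i, g.symm (VnX k n 0 i) ∈ Submodule.span k (Set.range (VnX k n 0))) :
    ∃ (σ : Equiv.Perm (Fin n)) (r : Fin n → kˣ),
      ∀ i, g (VnX k n 0 i) = (r i : k) • VnX k n 0 (σ i) := by
  classical
  set X := VnX k n 0 with hX
  set χ := VnChi k n with hχ
  set c : Fin n → Fin n → k := fun i l => χ l (g (X i)) with hc
  set d : Fin n → Fin n → k := fun i l => χ l (g.symm (X i)) with hd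
  have hgX : ∀ i, g (X i) = ∑ l, c i l • X l := fun i => Vn_span_repr k n (hg i)
  have hgX' : ∀ i, g.symm (X i) = ∑ l, d i l • X l := fun i => Vn_span_repr k n (hg' i)
  have hχX : ∀ l m : Fin n, χ l (X m) = if m = l then (1 : k) else 0 := fun l m =>
    VnChi_X k n l m
  have two_ne : (2 : k) ≠ 0 := Ring.two_ne_zero hchar
  -- column orthogonality
  have hcol : ∀ (i j l : Fin n), i ≠ j → c i l * c j l = 0 := by
    intro i j l hij
    have hrel := VnX_anticomm k n hij
    have h1 : c i l * c j l + c j l * c i l = 0 := by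
      have := congrArg (χ l) (congrArg g hrel)
      simpa [hc] using this
    have h2 : (2 : k) * (c i l * c j l) = 0 := by linear_combination h1
    exact (mul_eq_zero.mp h2).resolve_left two_ne
  -- C * D = 1 entrywise
  have hsum : ∀ i m, (∑ l, c i l * d l m) = if i = m then (1 : k) else 0 := by
    intro i m
    have h1 : X i = ∑ p, (∑ l, c i l * d l p) • X p := by
      conv_lhs => rw [← g.symm_apply_apply (X i)]
      rw [hgX i, map_sum]
      simp_rw [map_smul, hgX', Finset.smul_sum, smul_smul]
      rw [Finset.sum_comm]
      simp_rw [← Finset.sum_smul]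
    have h2 := congrArg (χ m) h1
    rw [map_sum] at h2
    simp_rw [map_smul, hχX, smul_eq_mul] at h2
    rw [Finset.sum_eq_single m (fun b _ hb => by simp [hb]) (by simp)] at h2
    simpa using h2.symm
  -- D * C = 1 entrywise, via matrices
  have hsum' : ∀ l m, (∑ j, d l j * c j m) = if l = m then (1 : k) else 0 := by
    have hCD : Matrix.of c * Matrix.of d = 1 := by
      ext i m
      rw [Matrix.mul_apply, Matrix.one_apply]
      exact hsum i m
    have hDC := mul_eq_one_comm.mp hCD
    intro l m
    have := congrFun (congrFun hDC l) m
    rw [Matrix.mul_apply, Matrix.one_apply] at this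
    exact this
  -- each row of c has a nonzero entry
  have hex : ∀ i, ∃ l, c i l ≠ 0 := by
    intro i
    by_contra h
    push_neg at h
    have h0 : g (X i) = 0 := by rw [hgX i]; simp [h]
    have h1 : X i = (0 : Vn k n 0) := by
      apply g.injective
      rw [h0, map_zero]
    have h2 := congrArg (χ i) h1
    rw [hχX, map_zero] at h2
    simp at h2
  -- each row of c has at most one nonzero entry
  have huniq : ∀ i l l', c i l ≠ 0 → c i l' ≠ 0 → l = l' := by
    intro i l l' hl hl'
    by_contra hne
    have hzl' : ∀ j, j ≠ i → c j l' = 0 := fun j hj =>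
      (mul_eq_zero.mp (hcol i j l' hj.symm)).resolve_left hl'
    have hzl : ∀ j, j ≠ i → c j l = 0 := fun j hj =>
      (mul_eq_zero.mp (hcol i j l hj.symm)).resolve_left hl
    have e1 := hsum' l l'
    rw [Finset.sum_eq_single i (fun j _ hj => by rw [hzl' j hj, mul_zero]) (by simp),
      if_neg hne] at e1
    have hdl : d l i = 0 := (mul_eq_zero.mp e1).resolve_right hl'
    have e2 := hsum' l l
    rw [Finset.sum_eq_single i (fun j _ hj => by rw [hzl j hj, mul_zero]) (by simp),
      if_pos rfl, hdl, zero_mul] at e2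
    exact zero_ne_one e2
  choose σf hσf using hex
  have hinj : Function.Injective σf := by
    intro i j hij
    by_contra hne
    have h0 := hcol i j (σf j) hne
    have hi : c i (σf j) ≠ 0 := hij ▸ hσf i
    exact (mul_ne_zero hi (hσf j)) h0
  refine ⟨Equiv.ofBijective σf ((Finite.injective_iff_bijective).mp hinj),
    fun i => Units.mk0 (c i (σf i)) (hσf i), fun i => ?_⟩
  show g (X i) = c i (σf i) • X (σf i)
  rw [hgX i, Finset.sum_eq_single (σf i)
    (fun b _ hb => by
      have : c i b = 0 := by
        by_contra hb0
        exact hb (huniq i b (σf i) hb0 (hσf i))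
      rw [this, zero_smul])
    (by simp)]
end

section
/- The group of affine automorphisms of W_n = k<x_1,...,x_n>/(x_i x_j + x_j x_i - 1, i≠j), for n ≥ 3 over a domain k with 2 invertible, is S_n × {±1}: every affine automorphism is x_i -> ε x_{σ(i)} with ε = ±1 and σ in S_n. -/
namespace Wn13

variable {k : Type*} [CommRing k] {n : ℕ}

local notation "W" => Vn k n (fun _ _ => (1:k))
local notation "X" => VnX k n (fun _ _ => (1:k))

lemma X_rel {i j : Fin n} (h : i ≠ j) : X i * X j + X j * X i = 1 := by
  rcases lt_or_gt_of_ne h with h | h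
  · have := RingQuot.mkAlgHom_rel k (VnRel.rel (a := fun _ _ => (1:k)) i j h)
    simpa [VnX, map_add, map_mul] using this
  · have := RingQuot.mkAlgHom_rel k (VnRel.rel (a := fun _ _ => (1:k)) j i h)
    rw [add_comm]
    simpa [VnX, map_add, map_mul] using this

/-- The bilinear form with `B eᵢ eᵢ = q i`, `B eᵢ eⱼ = 1` for `i < j`, `0` for `i > j`. -/
noncomputable def Bq (q : Fin n → k) : LinearMap.BilinMap k (Fin n → k) k :=
  LinearMap.mk₂ k
    (fun x y => ∑ i, ∑ j, (if i = j then q i else if i < j then 1 else 0) * (x i * y j))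
    (by intro x x' y; simp [mul_add, add_mul, Finset.sum_add_distrib])
    (by intro c x y; simp [Finset.mul_sum, mul_left_comm, mul_assoc, mul_comm])
    (by intro x y y'; simp [mul_add, Finset.sum_add_distrib])
    (by intro c x y; simp [Finset.mul_sum, mul_left_comm, mul_assoc, mul_comm])

noncomputable def Qq (q : Fin n → k) : QuadraticForm k (Fin n → k) :=
  (Bq q).toQuadraticMap

lemma Bq_single (q : Fin n → k) (l m : Fin n) :
    Bq q (Pi.single l 1) (Pi.single m 1) = if l = m then q l else if l < m then 1 else 0 := by
  simp only [Bq, LinearMap.mk₂_apply, Pi.single_apply]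
  rw [Finset.sum_eq_single l]
  · rw [Finset.sum_eq_single m] <;> simp +contextual
  · simp +contextual
  · simp

lemma Qq_single (q : Fin n → k) (l : Fin n) : Qq q (Pi.single l 1) = q l := by
  simp [Qq, LinearMap.BilinMap.toQuadraticMap_apply, Bq_single]

lemma polar_Qq (q : Fin n → k) {l m : Fin n} (h : l ≠ m) :
    QuadraticMap.polar (Qq q) (Pi.single l 1) (Pi.single m 1) = 1 := by
  rw [Qq, LinearMap.BilinMap.polar_toQuadraticMap, Bq_single, Bq_single]
  rcases lt_or_gt_of_ne h with h' | h' <;>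
    simp [h, h.symm, h', asymm h', if_neg (asymm h')]


/-- The representation of `W` on the Clifford algebra of `Qq q`. -/
noncomputable def phi (q : Fin n → k) : Vn k n (fun _ _ => (1:k)) →ₐ[k] CliffordAlgebra (Qq q) :=
  RingQuot.liftAlgHom k
    ⟨FreeAlgebra.lift k (fun i => CliffordAlgebra.ι (Qq q) (Pi.single i 1)), by
      rintro x y ⟨i, j, hij⟩
      simp only [map_add, map_mul, FreeAlgebra.lift_ι_apply, AlgHom.commutes]
      rw [CliffordAlgebra.ι_mul_ι_add_swap, polar_Qq q hij.ne]⟩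

lemma phi_X (q : Fin n → k) (i : Fin n) :
    phi q (X i) = CliffordAlgebra.ι (Qq q) (Pi.single i 1) := by
  rw [VnX, phi, RingQuot.liftAlgHom_mkAlgHom_apply, FreeAlgebra.lift_ι_apply]

/-- Linear independence of `1, xₗ, xₗ²` in `W`. -/
lemma indep (h2 : IsUnit (2:k)) (α : k) (β γ : Fin n → k)
    (h : algebraMap k _ α + (∑ l, β l • X l) + (∑ l, γ l • (X l * X l)) = 0) :
    α = 0 ∧ (∀ l, β l = 0) ∧ (∀ l, γ l = 0) := by
  have h2' : Invertible (2:k) := h2.invertible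
  have key : ∀ q : Fin n → k, α + ∑ l, γ l * q l = 0 ∧ ∀ l, β l = 0 := by
    intro q
    have h0 := congrArg (phi q) h
    simp only [map_add, map_sum, map_zero, map_smul, map_mul, phi_X, AlgHom.commutes] at h0
    have e1 : ∀ l : Fin n, γ l • ((CliffordAlgebra.ι (Qq q)) (Pi.single l 1)
        * (CliffordAlgebra.ι (Qq q)) (Pi.single l 1)) = algebraMap k _ (γ l * q l) := fun l => by
      rw [CliffordAlgebra.ι_sq_scalar, Qq_single, Algebra.smul_def, ← map_mul]
    have e2 : ∀ l : Fin n, β l • (CliffordAlgebra.ι (Qq q)) (Pi.single l 1)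
        = CliffordAlgebra.ι (Qq q) (β l • (Pi.single l 1 : Fin n → k)) :=
      fun l => (map_smul _ _ _).symm
    rw [Finset.sum_congr rfl (fun l _ => e1 l), Finset.sum_congr rfl (fun l _ => e2 l),
      ← map_sum] at h0
    have h1 : algebraMap k (CliffordAlgebra (Qq q)) (α + ∑ l, γ l * q l)
        + CliffordAlgebra.ι (Qq q) (∑ l, β l • (Pi.single l 1 : Fin n → k)) = 0 := by
      rw [map_add, map_sum, ← h0]; abel
    have h3 := congrArg (CliffordAlgebra.equivExterior (Qq q)) h1
    rw [map_add, map_zero, CliffordAlgebra.equivExterior] at h3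
    rw [CliffordAlgebra.changeFormEquiv_apply, CliffordAlgebra.changeFormEquiv_apply,
      CliffordAlgebra.changeForm_algebraMap, CliffordAlgebra.changeForm_ι] at h3
    have h4 : ExteriorAlgebra.ι k (∑ l, β l • (Pi.single l 1 : Fin n → k))
        = algebraMap k _ (-(α + ∑ l, γ l * q l)) := by
      rw [map_neg]; exact eq_neg_of_add_eq_zero_right h3
    obtain ⟨hv, hs⟩ := (ExteriorAlgebra.ι_eq_algebraMap_iff _ _).mp h4
    refine ⟨neg_eq_zero.mp hs, fun l => ?_⟩
    have := congrFun hv l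
    simpa [Finset.sum_apply, Pi.single_apply, Finset.sum_ite_eq'] using this
  have hβ := (key 0).2
  have hα : α = 0 := by simpa using (key 0).1
  refine ⟨hα, hβ, fun m => ?_⟩
  have := (key (Pi.single m 1)).1
  rw [hα] at this
  simpa [Pi.single_apply, Finset.sum_ite_eq', mul_ite] using this


lemma L_mul (u v : Fin n → k) :
    (∑ l, u l • X l) * (∑ m, v m • X m) + (∑ m, v m • X m) * (∑ l, u l • X l)
      = algebraMap k _ (∑ l, ∑ m, if l = m then 0 else u l * v m)
        + ∑ l, (2 * (u l * v l)) • (X l * X l) := by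
  classical
  have term : ∀ l m : Fin n, (u l • X l) * (v m • X m) + (v m • X m) * (u l • X l)
      = (if l = m then 0 else u l * v m) • (1 : Vn k n (fun _ _ => (1:k)))
        + (if l = m then 2*(u l*v l) else 0) • (X l * X l) := by
    intro l m
    rw [smul_mul_smul_comm, smul_mul_smul_comm]
    by_cases hlm : l = m
    · subst hlm
      rw [if_pos rfl, if_pos rfl, zero_smul, zero_add, mul_comm (v l), ← add_smul, ← two_mul]
    · simp only [if_neg hlm, zero_smul, add_zero]
      rw [mul_comm (v m), ← smul_add, X_rel hlm]
  calc (∑ l, u l • X l) * (∑ m, v m • X m) + (∑ m, v m • X m) * (∑ l, u l • X l)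
      = ∑ l, ∑ m, ((u l • X l) * (v m • X m) + (v m • X m) * (u l • X l)) := by
        rw [Finset.sum_mul_sum, Finset.sum_mul_sum,
          Finset.sum_comm (f := fun m l => (v m • X m) * (u l • X l)),
          ← Finset.sum_add_distrib]
        exact Finset.sum_congr rfl fun l _ => (Finset.sum_add_distrib).symm
    _ = ∑ l, ∑ m, ((if l = m then 0 else u l * v m) • (1 : Vn k n (fun _ _ => (1:k)))
        + (if l = m then 2*(u l*v l) else 0) • (X l * X l)) :=
        Finset.sum_congr rfl fun l _ => Finset.sum_congr rfl fun m _ => term l m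
    _ = (∑ l, ∑ m, (if l = m then 0 else u l * v m) • (1 : Vn k n (fun _ _ => (1:k))))
        + ∑ l, ∑ m, (if l = m then 2*(u l*v l) else 0) • (X l * X l) := by
        simp only [Finset.sum_add_distrib]
    _ = algebraMap k _ (∑ l, ∑ m, if l = m then 0 else u l * v m)
        + ∑ l, (2 * (u l * v l)) • (X l * X l) := by
        congr 1
        · simp only [map_sum, Algebra.algebraMap_eq_smul_one]
        · refine Finset.sum_congr rfl fun l _ => ?_
          rw [← Finset.sum_smul, Finset.sum_ite_eq, if_pos (Finset.mem_univ l)]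

lemma scalar_mul_expand (a b : k) (A B : Vn k n (fun _ _ => (1:k))) :
    (algebraMap k _ a + A) * (algebraMap k _ b + B)
      + (algebraMap k _ b + B) * (algebraMap k _ a + A)
    = algebraMap k _ (2*(a*b)) + ((2*a) • B + (2*b) • A) + (A*B + B*A) := by
  simp only [Algebra.algebraMap_eq_smul_one, add_mul, mul_add, smul_mul_assoc,
    mul_smul_comm, one_mul, mul_one, smul_smul]
  module

lemma expand_rel (a b : k) (u v : Fin n → k)
    (h : (algebraMap k _ a + ∑ l, u l • X l) * (algebraMap k _ b + ∑ l, v l • X l)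
       + (algebraMap k _ b + ∑ l, v l • X l) * (algebraMap k _ a + ∑ l, u l • X l) = 1) :
    algebraMap k _ (2*(a*b) + (∑ l, ∑ m, if l = m then 0 else u l * v m) - 1)
      + (∑ l, (2*(a * v l) + 2*(b * u l)) • X l)
      + (∑ l, (2*(u l * v l)) • (X l * X l)) = 0 := by
  rw [scalar_mul_expand, L_mul] at h
  rw [map_sub, map_add, map_one]
  have e3 : (∑ l, (2*(a * v l) + 2*(b * u l)) • X l)
      = (2*a) • (∑ l, v l • X l) + (2*b) • (∑ l, u l • X l) := by
    rw [Finset.smul_sum, Finset.smul_sum, ← Finset.sum_add_distrib]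
    refine Finset.sum_congr rfl fun l _ => ?_
    rw [add_smul, smul_smul, smul_smul]
    module
  rw [e3, ← h]
  abel

end Wn13

/-- for `n ≥ 3` over a commutative domain `k` with `2` invertible, every
affine automorphism of `W_n = k⟨x₁,…,xₙ⟩/(xᵢxⱼ + xⱼxᵢ - 1, i ≠ j)` is of the form
`xᵢ ↦ ε x_{σ(i)}` with `ε = ±1` and `σ ∈ Sₙ`; i.e. the group of affine automorphisms of
`W_n` is `Sₙ × {±1}`. -/
theorem affine_automorphisms_of_Wn (k : Type*) [CommRing k] [IsDomain k]
    (h2 : IsUnit (2 : k)) (n : ℕ) (hn : 3 ≤ n)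
    (g : Vn k n (fun _ _ => 1) ≃ₐ[k] Vn k n (fun _ _ => 1))
    (hg : ∀ i, g (VnX k n (fun _ _ => 1) i) ∈
      Submodule.span k
        (insert (1 : Vn k n (fun _ _ => 1)) (Set.range (VnX k n (fun _ _ => 1))))) :
    ∃ (σ : Equiv.Perm (Fin n)) (ε : k), (ε = 1 ∨ ε = -1) ∧
      ∀ i, g (VnX k n (fun _ _ => 1) i) = ε • VnX k n (fun _ _ => 1) (σ i) := by
  classical
  have h2ne : (2:k) ≠ 0 := h2.ne_zero
  have hspan : ∀ i, ∃ (z : k) (w : Fin n → k),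
      g (VnX k n (fun _ _ => 1) i)
        = algebraMap k _ z + ∑ l, w l • VnX k n (fun _ _ => 1) l := by
    intro i
    obtain ⟨z, w, hw, hx⟩ := Submodule.mem_span_insert.mp (hg i)
    obtain ⟨rr, hr⟩ := (Submodule.mem_span_range_iff_exists_fun k).mp hw
    exact ⟨z, rr, by rw [hx, ← hr, Algebra.algebraMap_eq_smul_one]⟩
  choose c r hcr using hspan
  have main : ∀ i j, i ≠ j →
      (2*(c i*c j) + (∑ l, ∑ m, if l = m then 0 else r i l * r j m) - 1 = 0)
      ∧ (∀ l, 2*(c i * r j l) + 2*(c j * r i l) = 0)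
      ∧ (∀ l, 2*(r i l * r j l) = 0) := by
    intro i j hij
    have hrel : g (VnX k n (fun _ _ => 1) i) * g (VnX k n (fun _ _ => 1) j)
        + g (VnX k n (fun _ _ => 1) j) * g (VnX k n (fun _ _ => 1) i) = 1 := by
      rw [← map_mul, ← map_mul, ← map_add, Wn13.X_rel hij, map_one]
    rw [hcr i, hcr j] at hrel
    have h0 := Wn13.expand_rel (c i) (c j) (r i) (r j) hrel
    exact Wn13.indep h2 _ _ _ h0
  have rowne : ∀ i, ∃ l, r i l ≠ 0 := by
    intro i
    by_contra hcon
    push_neg at hcon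
    have hgi : g (VnX k n (fun _ _ => 1) i) = algebraMap k _ (c i) := by
      rw [hcr i]; simp [hcon]
    have hXi : VnX k n (fun _ _ => 1) i = algebraMap k _ (c i) :=
      g.injective (by rw [hgi, AlgEquiv.commutes])
    have h0 : algebraMap k _ (-(c i))
        + (∑ l, (if l = i then (1:k) else 0) • VnX k n (fun _ _ => 1) l)
        + (∑ l, (0:k) • (VnX k n (fun _ _ => 1) l * VnX k n (fun _ _ => 1) l)) = 0 := by
      have hsum : (∑ l, (if l = i then (1:k) else 0) • VnX k n (fun _ _ => 1) l)
          = VnX k n (fun _ _ => 1) i := by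
        simp [ite_smul, Finset.sum_ite_eq']
      rw [hsum, hXi]
      simp
    obtain ⟨_, hβ, _⟩ := Wn13.indep h2 _ _ _ h0
    simpa using hβ i
  choose σ0 hσ0 using rowne
  have colzero : ∀ i j, i ≠ j → ∀ l, r i l = 0 ∨ r j l = 0 := fun i j hij l =>
    mul_eq_zero.mp ((mul_eq_zero.mp ((main i j hij).2.2 l)).resolve_left h2ne)
  have hinj : Function.Injective σ0 := by
    intro i j hijs
    by_contra hij
    rcases colzero i j hij (σ0 i) with h | h
    · exact hσ0 i h
    · rw [hijs] at h; exact hσ0 j h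
  have hbij : Function.Bijective σ0 := Finite.injective_iff_bijective.mp hinj
  have hsingle : ∀ i l, l ≠ σ0 i → r i l = 0 := by
    intro i l hl
    obtain ⟨i', hi'⟩ := hbij.2 l
    have hii' : i ≠ i' := fun h => hl (by rw [← hi', h])
    rcases colzero i i' hii' l with h | h
    · exact h
    · exact absurd (by rw [← hi'] at h; exact h) (fun h' => hσ0 i' h')
  have third : ∀ i j : Fin n, ∃ m : Fin n, m ≠ i ∧ m ≠ j := by
    intro i j
    have hc : ({i, j} : Finset (Fin n)).card ≤ 2 :=
      (Finset.card_insert_le _ _).trans (by simp)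
    have hpos : 0 < (({i, j} : Finset (Fin n))ᶜ).card := by
      rw [Finset.card_compl, Fintype.card_fin]
      omega
    obtain ⟨m, hm⟩ := Finset.card_pos.mp hpos
    simp only [Finset.mem_compl, Finset.mem_insert, Finset.mem_singleton, not_or] at hm
    exact ⟨m, hm.1, hm.2⟩
  have hc0 : ∀ i, c i = 0 := by
    intro i
    obtain ⟨j, hji, -⟩ := third i i
    have hβ := (main i j (Ne.symm hji)).2.1 (σ0 j)
    have hrij : r i (σ0 j) = 0 :=
      hsingle i _ (fun h => hji (hinj h))
    rw [hrij, mul_zero, mul_zero, add_zero] at hβ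
    rcases mul_eq_zero.mp hβ with h | h
    · exact absurd h h2ne
    · rcases mul_eq_zero.mp h with h' | h'
      · exact h'
      · exact absurd h' (hσ0 j)
  have hprod : ∀ i j, i ≠ j → r i (σ0 i) * r j (σ0 j) = 1 := by
    intro i j hij
    have hα := (main i j hij).1
    have hS : (∑ l, ∑ m, if l = m then 0 else r i l * r j m)
        = r i (σ0 i) * r j (σ0 j) := by
      rw [Finset.sum_eq_single (σ0 i)
        (fun l _ hl => by simp [hsingle i l hl])
        (by simp)]
      rw [Finset.sum_eq_single (σ0 j)
        (fun m _ hm => by simp [hsingle j m hm])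
        (by simp)]
      rw [if_neg (fun h => hij (hinj h))]
    rw [hS, hc0 i, hc0 j] at hα
    linear_combination hα
  have hreq : ∀ i j, r i (σ0 i) = r j (σ0 j) := by
    intro i j
    by_cases hij : i = j
    · rw [hij]
    · obtain ⟨m, hmi, hmj⟩ := third i j
      have h1 := hprod i m (Ne.symm hmi)
      have h2' := hprod j m (Ne.symm hmj)
      have hz : (r i (σ0 i) - r j (σ0 j)) * r m (σ0 m) = 0 := by
        linear_combination h1 - h2'
      rcases mul_eq_zero.mp hz with h | h
      · exact sub_eq_zero.mp h
      · exact absurd h (hσ0 m)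
  have hi0 : (0:ℕ) < n := by omega
  have hi1 : (1:ℕ) < n := by omega
  set i0 : Fin n := ⟨0, hi0⟩ with hi0def
  set i1 : Fin n := ⟨1, hi1⟩ with hi1def
  have hi01 : i0 ≠ i1 := Fin.ne_of_val_ne (by simp [hi0def, hi1def])
  set ε := r i0 (σ0 i0) with hεdef
  have hε2 : ε * ε = 1 := by
    have hp := hprod i0 i1 hi01
    rw [← hreq i0 i1] at hp
    exact hp
  refine ⟨Equiv.ofBijective σ0 hbij, ε, mul_self_eq_one_iff.mp hε2, fun i => ?_⟩
  rw [hcr i, hc0 i, map_zero, zero_add]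
  rw [Finset.sum_eq_single (σ0 i)
    (fun l _ hl => by rw [hsingle i l hl, zero_smul])
    (by simp)]
  rw [hreq i i0]
  rfl
end

section
/- Let A and B be k-algebras that are free of ranks m and n over their centers C(A) and C(B) respectively (both k-flat). Then the regular trace on A ⊗ B satisfies tr(a ⊗ b) = tr(a) tr(b), and the discriminant of A ⊗ B over its center C(A) ⊗ C(B) equals d(A/C(A))^n · d(B/C(B))^m. -/
/-!
Since `CA ⊗ CB` acts on `A ⊗ B` factorwise, the products `xa i ⊗ xb j` form a basis of
`A ⊗ B` over `CA ⊗ CB`, and in it left multiplication by `x ⊗ y` has the Kronecker product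
of the matrices of left multiplication by `x` and by `y`. Hence `tr(x ⊗ y) = tr x ⊗ tr y`,
the trace-form matrix of the product basis is the Kronecker product of the two trace-form
matrices, and `det (M ⊗ N) = det M ^ n ⊗ det N ^ m`.
-/

open TensorProduct

section TensorBasis

variable {k CA CB A B : Type*} [CommRing k]
    [CommRing CA] [CommRing CB] [Algebra k CA] [Algebra k CB]
    [Ring A] [Ring B] [Algebra k A] [Algebra k B]
    [Algebra CA A] [Algebra CB B] [IsScalarTower k CA A] [IsScalarTower k CB B]
    {ι κ : Type*} (xa : Module.Basis ι CA A) (xb : Module.Basis κ CB B)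

noncomputable def tensorCoordEquiv : A ⊗[k] B ≃ₗ[k] (ι × κ →₀ CA ⊗[k] CB) :=
  (TensorProduct.congr (xa.repr.restrictScalars k) (xb.repr.restrictScalars k)).trans
    (finsuppTensorFinsupp k k CA CB ι κ)

@[simp]
lemma tensorCoordEquiv_tmul_apply (x : A) (y : B) (i : ι) (j : κ) :
    tensorCoordEquiv (k := k) xa xb (x ⊗ₜ[k] y) (i, j) = xa.repr x i ⊗ₜ[k] xb.repr y j := by
  simp [tensorCoordEquiv]

variable [Algebra (CA ⊗[k] CB) (A ⊗[k] B)]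
    (halg : ∀ c : CA ⊗[k] CB, algebraMap (CA ⊗[k] CB) (A ⊗[k] B) c =
      Algebra.TensorProduct.map (IsScalarTower.toAlgHom k CA A)
        (IsScalarTower.toAlgHom k CB B) c)

include halg

lemma tmul_smul_tmul_of_algebraMap_eq (ca : CA) (cb : CB) (x : A) (y : B) :
    (ca ⊗ₜ[k] cb) • (x ⊗ₜ[k] y) = (ca • x) ⊗ₜ[k] (cb • y) := by
  rw [Algebra.smul_def, halg, Algebra.TensorProduct.map_tmul,
    Algebra.TensorProduct.tmul_mul_tmul, IsScalarTower.coe_toAlgHom',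
    IsScalarTower.coe_toAlgHom', ← Algebra.smul_def, ← Algebra.smul_def]

lemma tensorCoordEquiv_smul (c : CA ⊗[k] CB) (z : A ⊗[k] B) :
    tensorCoordEquiv (k := k) xa xb (c • z) = c • tensorCoordEquiv (k := k) xa xb z := by
  induction c using TensorProduct.induction_on with
  | zero => simp
  | add c₁ c₂ h₁ h₂ => simp only [add_smul, map_add, h₁, h₂]
  | tmul ca cb =>
    induction z using TensorProduct.induction_on with
    | zero => simp
    | add z₁ z₂ h₁ h₂ => simp only [smul_add, map_add, h₁, h₂]
    | tmul x y =>
      ext ⟨i, j⟩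
      simp [tmul_smul_tmul_of_algebraMap_eq halg]

noncomputable def tensorBasis : Module.Basis (ι × κ) (CA ⊗[k] CB) (A ⊗[k] B) :=
  .ofRepr { tensorCoordEquiv (k := k) xa xb with map_smul' := tensorCoordEquiv_smul xa xb halg }

lemma tensorBasis_repr_apply (z : A ⊗[k] B) (p : ι × κ) :
    (tensorBasis xa xb halg).repr z p = tensorCoordEquiv (k := k) xa xb z p := rfl

lemma tensorBasis_apply (p : ι × κ) : tensorBasis xa xb halg p = xa p.1 ⊗ₜ[k] xb p.2 := by
  rw [Module.Basis.apply_eq_iff]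
  change tensorCoordEquiv (k := k) xa xb _ = _
  simp [tensorCoordEquiv, Algebra.TensorProduct.one_def]

open scoped Kronecker in
lemma toMatrix_mulLeft_tmul [Fintype ι] [Fintype κ] [DecidableEq ι] [DecidableEq κ]
    (x : A) (y : B) :
    LinearMap.toMatrix (tensorBasis xa xb halg) (tensorBasis xa xb halg)
        (LinearMap.mulLeft (CA ⊗[k] CB) (x ⊗ₜ[k] y)) =
      LinearMap.toMatrix xa xa (LinearMap.mulLeft CA x) ⊗ₖₜ[k]
        LinearMap.toMatrix xb xb (LinearMap.mulLeft CB y) := by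
  ext ⟨i, j⟩ ⟨i', j'⟩
  simp only [LinearMap.toMatrix_apply, tensorBasis_apply, LinearMap.mulLeft_apply,
    Algebra.TensorProduct.tmul_mul_tmul, tensorBasis_repr_apply, tensorCoordEquiv_tmul_apply,
    Matrix.kroneckerTMul_apply]

end TensorBasis

section RegularTrace

variable {k CA CB A B : Type*} [CommRing k]
    [CommRing CA] [CommRing CB] [Algebra k CA] [Algebra k CB]
    [Ring A] [Ring B] [Algebra k A] [Algebra k B]
    [Algebra CA A] [Algebra CB B] [IsScalarTower k CA A] [IsScalarTower k CB B]
    [Module.Free CA A] [Module.Finite CA A] [Module.Free CB B] [Module.Finite CB B]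
    [Algebra (CA ⊗[k] CB) (A ⊗[k] B)]
    (halg : ∀ c : CA ⊗[k] CB, algebraMap (CA ⊗[k] CB) (A ⊗[k] B) c =
      Algebra.TensorProduct.map (IsScalarTower.toAlgHom k CA A)
        (IsScalarTower.toAlgHom k CB B) c)

include halg

lemma trace_mulLeft_tmul (x : A) (y : B) :
    LinearMap.trace (CA ⊗[k] CB) (A ⊗[k] B) (LinearMap.mulLeft (CA ⊗[k] CB) (x ⊗ₜ[k] y)) =
      LinearMap.trace CA A (LinearMap.mulLeft CA x) ⊗ₜ[k]
        LinearMap.trace CB B (LinearMap.mulLeft CB y) := by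
  classical
  let xa := Module.Free.chooseBasis CA A
  let xb := Module.Free.chooseBasis CB B
  rw [LinearMap.trace_eq_matrix_trace _ (tensorBasis xa xb halg),
    LinearMap.trace_eq_matrix_trace CA xa, LinearMap.trace_eq_matrix_trace CB xb,
    toMatrix_mulLeft_tmul, Matrix.trace_kroneckerTMul]

open scoped Kronecker in
lemma traceForm_matrix_tmul {ι κ : Type*} (u : ι → A) (v : κ → B) :
    (Matrix.of fun p q : ι × κ => LinearMap.trace (CA ⊗[k] CB) (A ⊗[k] B)
        (LinearMap.mulLeft (CA ⊗[k] CB) ((u p.1 ⊗ₜ[k] v p.2) * (u q.1 ⊗ₜ[k] v q.2)))) =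
      (Matrix.of fun i j => LinearMap.trace CA A (LinearMap.mulLeft CA (u i * u j))) ⊗ₖₜ[k]
        (Matrix.of fun i j => LinearMap.trace CB B (LinearMap.mulLeft CB (v i * v j))) := by
  ext ⟨i, j⟩ ⟨i', j'⟩
  rw [Matrix.of_apply, Algebra.TensorProduct.tmul_mul_tmul, trace_mulLeft_tmul halg]
  rfl

end RegularTrace

theorem discriminant_of_tensor_product_general {k CA CB A B : Type*} [CommRing k]
    [CommRing CA] [CommRing CB] [Algebra k CA] [Algebra k CB]
    [Ring A] [Ring B] [Algebra k A] [Algebra k B]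
    [Algebra CA A] [Algebra CB B] [IsScalarTower k CA A] [IsScalarTower k CB B]
    [Module.Free CA A] [Module.Finite CA A] [Module.Free CB B] [Module.Finite CB B]
    {ι κ : Type*} [Fintype ι] [Fintype κ] [DecidableEq ι] [DecidableEq κ]
    (xa : Module.Basis ι CA A) (xb : Module.Basis κ CB B)
    [Algebra (CA ⊗[k] CB) (A ⊗[k] B)]
    (halg : ∀ c : CA ⊗[k] CB, algebraMap (CA ⊗[k] CB) (A ⊗[k] B) c =
      Algebra.TensorProduct.map (IsScalarTower.toAlgHom k CA A)
        (IsScalarTower.toAlgHom k CB B) c) :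
    (∀ (x : A) (y : B),
      LinearMap.trace (CA ⊗[k] CB) (A ⊗[k] B)
          (LinearMap.mulLeft (CA ⊗[k] CB) (x ⊗ₜ[k] y)) =
        (LinearMap.trace CA A (LinearMap.mulLeft CA x)) ⊗ₜ[k]
          (LinearMap.trace CB B (LinearMap.mulLeft CB y))) ∧
    Matrix.det (Matrix.of fun p q : ι × κ =>
        LinearMap.trace (CA ⊗[k] CB) (A ⊗[k] B)
          (LinearMap.mulLeft (CA ⊗[k] CB)
            ((xa p.1 ⊗ₜ[k] xb p.2) * (xa q.1 ⊗ₜ[k] xb q.2)))) =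
      (Matrix.det (Matrix.of fun i j : ι =>
          LinearMap.trace CA A (LinearMap.mulLeft CA (xa i * xa j))) ^ Fintype.card κ)
        ⊗ₜ[k]
      (Matrix.det (Matrix.of fun i j : κ =>
          LinearMap.trace CB B (LinearMap.mulLeft CB (xb i * xb j))) ^ Fintype.card ι) :=
  ⟨trace_mulLeft_tmul halg, by rw [traceForm_matrix_tmul halg, Matrix.det_kroneckerTMul]⟩

/-- let `A`, `B` be `k`-algebras, free of ranks `m = |ι|`, `n = |κ|` over
their centers `C(A)`, `C(B)` (both `k`-flat).  Then the regular trace on `A ⊗ B` (over its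
center `C(A) ⊗ C(B)`) satisfies `tr(a ⊗ b) = tr(a) tr(b)`, and the discriminant of
`A ⊗ B` over `C(A) ⊗ C(B)` equals `d(A/C(A))ⁿ · d(B/C(B))ᵐ`. -/
theorem discriminant_of_tensor_product {k CA CB A B : Type*} [CommRing k]
    [CommRing CA] [CommRing CB] [Algebra k CA] [Algebra k CB]
    [Module.Flat k CA] [Module.Flat k CB]
    [Ring A] [Ring B] [Algebra k A] [Algebra k B]
    [Algebra CA A] [Algebra CB B] [IsScalarTower k CA A] [IsScalarTower k CB B]
    [Module.Free CA A] [Module.Finite CA A] [Module.Free CB B] [Module.Finite CB B]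
    (hA : ∀ x : A, x ∈ Set.center A ↔ x ∈ Set.range (algebraMap CA A))
    (hB : ∀ x : B, x ∈ Set.center B ↔ x ∈ Set.range (algebraMap CB B))
    {ι κ : Type*} [Fintype ι] [Fintype κ] [DecidableEq ι] [DecidableEq κ]
    (xa : Module.Basis ι CA A) (xb : Module.Basis κ CB B)
    [Algebra (CA ⊗[k] CB) (A ⊗[k] B)]
    (halg : ∀ c : CA ⊗[k] CB, algebraMap (CA ⊗[k] CB) (A ⊗[k] B) c =
      Algebra.TensorProduct.map (IsScalarTower.toAlgHom k CA A)
        (IsScalarTower.toAlgHom k CB B) c) :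
    (∀ (x : A) (y : B),
      LinearMap.trace (CA ⊗[k] CB) (A ⊗[k] B)
          (LinearMap.mulLeft (CA ⊗[k] CB) (x ⊗ₜ[k] y)) =
        (LinearMap.trace CA A (LinearMap.mulLeft CA x)) ⊗ₜ[k]
          (LinearMap.trace CB B (LinearMap.mulLeft CB y))) ∧
    Matrix.det (Matrix.of fun p q : ι × κ =>
        LinearMap.trace (CA ⊗[k] CB) (A ⊗[k] B)
          (LinearMap.mulLeft (CA ⊗[k] CB)
            ((xa p.1 ⊗ₜ[k] xb p.2) * (xa q.1 ⊗ₜ[k] xb q.2)))) =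
      (Matrix.det (Matrix.of fun i j : ι =>
          LinearMap.trace CA A (LinearMap.mulLeft CA (xa i * xa j))) ^ Fintype.card κ)
        ⊗ₜ[k]
      (Matrix.det (Matrix.of fun i j : κ =>
          LinearMap.trace CB B (LinearMap.mulLeft CB (xb i * xb j))) ^ Fintype.card ι) :=
  discriminant_of_tensor_product_general xa xb halg
end

section
/- In W_n over a commutative domain k (any characteristic), the alternating sum Ω_n = Σ_{σ ∈ S_n} (-1)^{|σ|} x_{σ(1)}···x_{σ(n)} satisfies x_i Ω_n = (-1)^{n-1} Ω_n x_i for all i = 1,...,n. In particular, when n is odd, Ω_n is central in W_n. -/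
/-- The antisymmetrized product `Ωₙ = ∑_{σ ∈ Sₙ} (-1)^|σ| x_{σ(1)} ⋯ x_{σ(n)}` of the
generators of `W_n`. -/
noncomputable def WnOmega (k : Type*) [CommRing k] (n : ℕ) : Vn k n (fun _ _ => 1) :=
  ∑ σ : Equiv.Perm (Fin n),
    (Equiv.Perm.sign σ : ℤ) • (List.ofFn fun i => VnX k n (fun _ _ => 1) (σ i)).prod

/-!
Write `Alt f` (`altProd`) for the signed sum of the words `f (σ 0) ⋯ f (σ (m-1))` of a family
`f : Fin m → A` in a ring, and `∂f` (`altBoundary`) for `∑_p (-1)^p Alt (f without p)`. The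
Laplace expansion of `Alt` along the last entry and `∂∂ = 0` come from the sign-reversing
involution that exchanges the order in which two entries are deleted.

Pushing an element `y` with `y f_b + f_b y = 1` through every word gives
`y Alt f = (-1)^m Alt f y + m ∂f`. After permuting the family so that `z = x_i` comes first,
expand `Alt (z, g)` along `z` and argue by induction on the length of `g`: the terms `m ∂g z`
produced by that formula cancel against those in `∂(z, g) = Alt g ± m ∂g z`, and what is left
is `z² Alt g - Alt g z²`, which vanishes because `z²` commutes with every `g_b`. Since the `x_i`
generate `W_n`, `Ωₙ` is central when `n` is odd.
-/

open Finset Fin Equiv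

namespace Fin

variable {α : Type*} {m : ℕ}

lemma removeNth_succ_cons (a : α) (g : Fin (m + 1) → α) (q : Fin (m + 1)) :
    removeNth q.succ (cons a g : Fin (m + 2) → α) = (cons a (removeNth q g) : Fin (m + 1) → α) := by
  ext j
  cases j using Fin.cases <;> simp [removeNth_apply, succ_succAbove_succ]

def swapRemoved (x : Fin (m + 2) × Fin (m + 1)) : Fin (m + 2) × Fin (m + 1) :=
  (x.1.succAbove x.2, x.2.predAbove x.1)

lemma swapRemoved_involutive : Function.Involutive (swapRemoved (m := m)) := fun _ =>
  Prod.ext (succAbove_succAbove_predAbove _ _) (predAbove_predAbove_succAbove _ _)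

lemma removeNth_removeNth_swapRemoved (f : Fin (m + 2) → α) (x : Fin (m + 2) × Fin (m + 1)) :
    removeNth (swapRemoved x).2 (removeNth (swapRemoved x).1 f) = removeNth x.2 (removeNth x.1 f) :=
  (removeNth_removeNth_eq_swap f x.2 x.1).symm

lemma neg_one_pow_swapRemoved (x : Fin (m + 2) × Fin (m + 1)) :
    (-1 : ℤ) ^ ((swapRemoved x).1 + (swapRemoved x).2 : ℕ) = -(-1) ^ (x.1 + x.2 : ℕ) :=
  neg_one_pow_succAbove_add_predAbove x.1 x.2

variable {M : Type*} [AddCommGroup M]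

lemma sum_sum_removeNth_swap (f : Fin (m + 2) → α) (F : α → α → (Fin m → α) → M) :
    ∑ p : Fin (m + 2), ∑ q : Fin (m + 1),
        (-1 : ℤ) ^ (p + q : ℕ) • F (f p) (removeNth p f q) (removeNth q (removeNth p f)) =
      -∑ p : Fin (m + 2), ∑ q : Fin (m + 1),
        (-1 : ℤ) ^ (p + q : ℕ) • F (removeNth p f q) (f p) (removeNth q (removeNth p f)) := by
  simp only [← Fintype.sum_prod_type', ← sum_neg_distrib]
  rw [← Equiv.sum_comp (swapRemoved_involutive.toPerm _)]
  refine sum_congr rfl fun x _ => ?_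
  rw [Function.Involutive.coe_toPerm, removeNth_removeNth_swapRemoved, neg_one_pow_swapRemoved,
    neg_smul]
  simp only [swapRemoved, removeNth_apply, succAbove_succAbove_predAbove]

lemma sum_sum_removeNth_removeNth_eq_zero (f : Fin (m + 2) → α) (G : (Fin m → α) → M) :
    ∑ p : Fin (m + 2), ∑ q : Fin (m + 1),
      (-1 : ℤ) ^ (p + q : ℕ) • G (removeNth q (removeNth p f)) = 0 := by
  rw [← Fintype.sum_prod_type']
  refine sum_involution (fun x _ => swapRemoved x) (fun x _ => ?_)
    (fun x _ _ => succAbove_ne x.1 x.2 ∘ congrArg Prod.fst) (fun _ _ => mem_univ _)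
    (fun x _ => swapRemoved_involutive x)
  rw [removeNth_removeNth_swapRemoved, neg_one_pow_swapRemoved, neg_smul, add_neg_cancel]

end Fin

namespace Equiv.Perm

variable {m : ℕ}

def consSuccAbove (p : Fin (m + 1)) (τ : Perm (Fin m)) : Perm (Fin (m + 1)) :=
  p.cycleRange.symm * decomposeFin.symm (0, τ)

lemma consSuccAbove_zero (p : Fin (m + 1)) (τ : Perm (Fin m)) : consSuccAbove p τ 0 = p := by
  simp [consSuccAbove]

lemma consSuccAbove_succ (p : Fin (m + 1)) (τ : Perm (Fin m)) (k : Fin m) :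
    consSuccAbove p τ k.succ = p.succAbove (τ k) := by
  simp [consSuccAbove]

lemma sign_consSuccAbove (p : Fin (m + 1)) (τ : Perm (Fin m)) :
    (sign (consSuccAbove p τ) : ℤ) = (-1) ^ (p : ℕ) * sign τ := by
  simp [consSuccAbove, Fin.sign_cycleRange]

lemma consSuccAbove_bijective :
    Function.Bijective fun x : Fin (m + 1) × Perm (Fin m) => consSuccAbove x.1 x.2 := by
  refine (Fintype.bijective_iff_injective_and_card _).2 ⟨fun x y hxy => ?_, ?_⟩
  · have h0 : x.1 = y.1 := by simpa [consSuccAbove_zero] using congrArg (· 0) hxy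
    refine Prod.ext h0 (Equiv.ext fun k => succAbove_right_injective (p := y.1) ?_)
    simpa only [consSuccAbove_succ, h0] using congrArg (· k.succ) hxy
  · simp [Fintype.card_perm, Nat.factorial_succ]

end Equiv.Perm

section AltProd

variable {A : Type*} [Ring A] {m : ℕ}

def altProd (f : Fin m → A) : A :=
  ∑ σ : Perm (Fin m), (Perm.sign σ : ℤ) • (List.ofFn fun i => f (σ i)).prod

def altBoundary (f : Fin (m + 1) → A) : A :=
  ∑ p : Fin (m + 1), (-1 : ℤ) ^ (p : ℕ) • altProd (removeNth p f)

@[simp] lemma altProd_zero (f : Fin 0 → A) : altProd f = 1 := by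
  simp [altProd, Subsingleton.elim _ (1 : Perm (Fin 0))]

lemma altProd_comp_perm (f : Fin m → A) (σ : Perm (Fin m)) :
    altProd (f ∘ σ) = (Perm.sign σ : ℤ) • altProd f := by
  rw [altProd, altProd, smul_sum, ← Equiv.sum_comp (Equiv.mulLeft σ⁻¹)]
  refine sum_congr rfl fun τ _ => ?_
  simp only [coe_mulLeft, Perm.sign_mul, Perm.sign_inv, Units.val_mul, Perm.coe_mul, Perm.coe_inv,
    Function.comp_apply, apply_symm_apply, mul_smul]

lemma commute_altProd {a : A} {f : Fin m → A} (h : ∀ b, Commute a (f b)) :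
    Commute a (altProd f) :=
  Commute.sum_right _ _ _ fun _ _ =>
    (Commute.list_prod_right _ _ (List.forall_mem_ofFn_iff.2 fun _ => h _)).smul_right _

lemma altProd_succ (f : Fin (m + 1) → A) :
    altProd f = ∑ p : Fin (m + 1), (-1 : ℤ) ^ (p : ℕ) • (f p * altProd (removeNth p f)) := by
  rw [altProd, ← Fintype.sum_bijective _ Perm.consSuccAbove_bijective _ _ fun _ => rfl,
    Fintype.sum_prod_type]
  refine sum_congr rfl fun p _ => ?_
  simp only [altProd, mul_sum, smul_sum, List.ofFn_succ, List.prod_cons,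
    Perm.consSuccAbove_zero, Perm.consSuccAbove_succ, Perm.sign_consSuccAbove, removeNth_apply,
    mul_smul, mul_smul_comm]

lemma altProd_succ_last (f : Fin (m + 1) → A) :
    altProd f = ∑ p : Fin (m + 1), (-1 : ℤ) ^ (m + p : ℕ) • (altProd (removeNth p f) * f p) := by
  induction m with
  | zero => simp [altProd_succ]
  | succ m ih =>
    calc altProd f
        = ∑ p : Fin (m + 2), ∑ q : Fin (m + 1), (-1 : ℤ) ^ (p + q : ℕ) •
            ((-1 : ℤ) ^ m • (f p * altProd (removeNth q (removeNth p f)) * removeNth p f q)) := by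
          rw [altProd_succ]
          refine sum_congr rfl fun p _ => ?_
          rw [ih, mul_sum, smul_sum]
          refine sum_congr rfl fun q _ => ?_
          simp only [mul_smul_comm, mul_assoc]
          module
      _ = -∑ p : Fin (m + 2), ∑ q : Fin (m + 1), (-1 : ℤ) ^ (p + q : ℕ) •
            ((-1 : ℤ) ^ m • (removeNth p f q * altProd (removeNth q (removeNth p f)) * f p)) :=
          sum_sum_removeNth_swap f fun a b v => (-1 : ℤ) ^ m • (a * altProd v * b)
      _ = _ := by
          rw [← sum_neg_distrib]
          refine sum_congr rfl fun p _ => ?_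
          rw [altProd_succ (removeNth p f), sum_mul, smul_sum, ← sum_neg_distrib]
          refine sum_congr rfl fun q _ => ?_
          simp only [smul_mul_assoc, mul_assoc]
          module

lemma altBoundary_succ_last (f : Fin (m + 2) → A) :
    altBoundary f =
      ∑ p : Fin (m + 2), (-1 : ℤ) ^ (m + 1 + p : ℕ) • (altBoundary (removeNth p f) * f p) := by
  calc altBoundary f
      = ∑ p : Fin (m + 2), ∑ q : Fin (m + 1), (-1 : ℤ) ^ (p + q : ℕ) •
          ((-1 : ℤ) ^ m • (altProd (removeNth q (removeNth p f)) * removeNth p f q)) := by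
        refine sum_congr rfl fun p _ => ?_
        rw [altProd_succ_last, smul_sum]
        refine sum_congr rfl fun q _ => ?_
        module
    _ = -∑ p : Fin (m + 2), ∑ q : Fin (m + 1), (-1 : ℤ) ^ (p + q : ℕ) •
          ((-1 : ℤ) ^ m • (altProd (removeNth q (removeNth p f)) * f p)) :=
        sum_sum_removeNth_swap f fun _ b v => (-1 : ℤ) ^ m • (altProd v * b)
    _ = _ := by
        rw [← sum_neg_distrib]
        refine sum_congr rfl fun p _ => ?_
        rw [altBoundary, sum_mul, smul_sum, ← sum_neg_distrib]
        refine sum_congr rfl fun q _ => ?_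
        simp only [smul_mul_assoc]
        module

lemma sum_mul_altBoundary_removeNth (f : Fin (m + 2) → A) :
    ∑ p : Fin (m + 2), (-1 : ℤ) ^ (p : ℕ) • (f p * altBoundary (removeNth p f)) =
      -altBoundary f := by
  calc _ = ∑ p : Fin (m + 2), ∑ q : Fin (m + 1), (-1 : ℤ) ^ (p + q : ℕ) •
          (f p * altProd (removeNth q (removeNth p f))) := by
        refine sum_congr rfl fun p _ => ?_
        rw [altBoundary, mul_sum, smul_sum]
        refine sum_congr rfl fun q _ => ?_
        simp only [mul_smul_comm]
        module
    _ = -∑ p : Fin (m + 2), ∑ q : Fin (m + 1), (-1 : ℤ) ^ (p + q : ℕ) •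
          (removeNth p f q * altProd (removeNth q (removeNth p f))) :=
        sum_sum_removeNth_swap f fun a _ v => a * altProd v
    _ = _ := by
        congr 1
        refine sum_congr rfl fun p _ => ?_
        rw [altProd_succ, smul_sum]
        refine sum_congr rfl fun q _ => ?_
        module

lemma sum_altBoundary_removeNth (f : Fin (m + 2) → A) :
    ∑ p : Fin (m + 2), (-1 : ℤ) ^ (p : ℕ) • altBoundary (removeNth p f) = 0 := by
  simp only [altBoundary, smul_sum, smul_smul, ← pow_add]
  exact sum_sum_removeNth_removeNth_eq_zero f altProd

lemma Commute.mul_self_of_commute_anticommutator {a b : A} (h : Commute a (a * b + b * a)) :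
    Commute (a * a) b := by
  have h' : a * a * b + a * b * a = a * b * a + b * a * a := by
    simpa only [mul_add, add_mul, mul_assoc] using h.eq
  rw [Commute, SemiconjBy, ← mul_assoc]
  exact add_right_cancel (h'.trans (add_comm _ _))

lemma mul_altProd_of_anticomm {y : A} {f : Fin (m + 1) → A}
    (hy : ∀ b, y * f b + f b * y = 1) :
    y * altProd f = (-1 : ℤ) ^ (m + 1) • (altProd f * y) + (m + 1 : ℤ) • altBoundary f := by
  induction m with
  | zero => simp [altBoundary, altProd_succ, eq_sub_of_add_eq (hy 0), sub_eq_neg_add]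
  | succ m ih =>
    have key : ∀ p : Fin (m + 2), y * ((-1 : ℤ) ^ (p : ℕ) • (f p * altProd (removeNth p f))) =
        (-1 : ℤ) ^ (p : ℕ) • altProd (removeNth p f)
          - (-1 : ℤ) ^ (m + 1) • ((-1 : ℤ) ^ (p : ℕ) • (f p * altProd (removeNth p f)) * y)
          - (m + 1 : ℤ) • ((-1 : ℤ) ^ (p : ℕ) • (f p * altBoundary (removeNth p f))) := by
      intro p
      rw [mul_smul_comm, ← mul_assoc, eq_sub_of_add_eq (hy p), sub_mul, one_mul, mul_assoc,
        ih (f := removeNth p f) fun b => hy _]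
      simp only [mul_add, mul_smul_comm, smul_mul_assoc, mul_assoc]
      module
    conv_lhs => rw [altProd_succ, mul_sum]
    rw [sum_congr rfl fun p _ => key p, sum_sub_distrib, sum_sub_distrib, ← smul_sum, ← smul_sum,
      ← sum_mul, sum_mul_altBoundary_removeNth, ← altProd_succ, ← altBoundary]
    push_cast
    module

lemma altBoundary_cons {z : A} {g : Fin (m + 1) → A} (hz : ∀ b, z * g b + g b * z = 1) :
    altBoundary (cons z g : Fin (m + 2) → A) =
      altProd g + ((-1 : ℤ) ^ (m + 1) * (m + 1 : ℤ)) • (altBoundary g * z) := by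
  induction m with
  | zero => simp [altBoundary, Fin.sum_univ_two, altProd_succ, removeNth_apply]
  | succ m ih =>
    have key : ∀ q : Fin (m + 2),
        (-1 : ℤ) ^ (m + 2 + q.succ : ℕ) •
            (altBoundary (removeNth q.succ (cons z g : Fin (m + 3) → A)) * g q) =
          (-1 : ℤ) ^ (m + 1 + q : ℕ) • (altProd (removeNth q g) * g q)
            + (m + 1 : ℤ) • ((-1 : ℤ) ^ (q : ℕ) • altBoundary (removeNth q g))
            + ((-1 : ℤ) ^ m * (m + 1 : ℤ)) •
              ((-1 : ℤ) ^ (m + 1 + q : ℕ) • (altBoundary (removeNth q g) * g q) * z) := by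
      intro q
      rw [removeNth_succ_cons, ih (g := removeNth q g) fun b => hz _, add_mul, smul_mul_assoc,
        mul_assoc, eq_sub_of_add_eq (hz q), mul_sub, mul_one, ← mul_assoc]
      simp only [Fin.val_succ, smul_mul_assoc]
      match_scalars
      all_goals ring_nf
      simp [pow_mul']
    rw [altBoundary_succ_last, Fin.sum_univ_succ]
    simp only [cons_zero, cons_succ, removeNth_zero, tail_cons, Fin.val_zero]
    rw [sum_congr rfl fun q _ => key q, sum_add_distrib, sum_add_distrib, ← smul_sum, ← smul_sum,
      ← sum_mul, ← altProd_succ_last, ← altBoundary_succ_last, sum_altBoundary_removeNth]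
    push_cast
    module

lemma mul_altProd_cons {z : A} {g : Fin m → A} (hz : ∀ b, z * g b + g b * z = 1) :
    z * altProd (cons z g : Fin (m + 1) → A) =
      (-1 : ℤ) ^ m • (altProd (cons z g : Fin (m + 1) → A) * z) := by
  induction m with
  | zero => simp [altProd_succ]
  | succ m ih =>
    set P := altProd (cons z g : Fin (m + 2) → A)
    set S := ∑ q : Fin (m + 1), (-1 : ℤ) ^ (q + 1 : ℕ) •
      (g q * altProd (cons z (removeNth q g) : Fin (m + 1) → A))
    set T := ∑ q : Fin (m + 1), (-1 : ℤ) ^ (q + 1 : ℕ) •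
      altProd (cons z (removeNth q g) : Fin (m + 1) → A)
    have hP : P = z * altProd g + S := by
      simp only [P, S, altProd_succ (cons z g), Fin.sum_univ_succ, cons_zero, cons_succ,
        removeNth_zero, tail_cons, removeNth_succ_cons, Fin.val_zero, Fin.val_succ, pow_zero,
        one_smul]
    have hT : altProd g + T = altProd g + ((-1 : ℤ) ^ (m + 1) * (m + 1 : ℤ)) •
        (altBoundary g * z) := by
      rw [← altBoundary_cons hz]
      simp only [T, altBoundary, Fin.sum_univ_succ, removeNth_zero, tail_cons,
        removeNth_succ_cons, Fin.val_zero, Fin.val_succ, pow_zero, one_smul]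
    have hzS : z * S = T - (-1 : ℤ) ^ m • (S * z) := by
      rw [mul_sum, sum_mul, smul_sum, ← sum_sub_distrib]
      refine sum_congr rfl fun q _ => ?_
      rw [mul_smul_comm, ← mul_assoc, eq_sub_of_add_eq (hz q), sub_mul, one_mul, mul_assoc,
        ih (g := removeNth q g) fun b => hz _]
      simp only [smul_mul_assoc, mul_smul_comm, mul_assoc]
      module
    have hzz : Commute (z * z) (altProd g) := commute_altProd fun b =>
      Commute.mul_self_of_commute_anticommutator (by rw [hz b]; exact Commute.one_right z)
    have hS : S = P - z * altProd g := by rw [hP, add_sub_cancel_left]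
    calc z * P = z * z * altProd g + T - (-1 : ℤ) ^ m • ((P - z * altProd g) * z) := by
          rw [← hS, add_sub_assoc, ← hzS, mul_assoc, ← mul_add, ← hP]
      _ = (-1 : ℤ) ^ (m + 1) • (P * z) := by
          rw [add_left_cancel hT, sub_mul, mul_assoc z, ← mul_assoc, mul_altProd_of_anticomm hz,
            hzz.eq]
          simp only [add_mul, smul_mul_assoc, mul_assoc]
          match_scalars
          all_goals ring_nf
          simp [pow_mul']

lemma mul_altProd_of_anticomm_of_ne {f : Fin (m + 1) → A} {i : Fin (m + 1)}
    (hf : ∀ j, j ≠ i → f i * f j + f j * f i = 1) :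
    f i * altProd f = (-1 : ℤ) ^ m • (altProd f * f i) := by
  have hcycle : (cons (f i) (removeNth i f) : Fin (m + 1) → A) ∘ i.cycleRange = f := by
    rw [cons_removeNth_eq_comp_cycleRange_symm, Function.comp_assoc, Equiv.symm_comp_self,
      Function.comp_id]
  have hsign :
      altProd f = (Perm.sign i.cycleRange : ℤ) • altProd (cons (f i) (removeNth i f)) := by
    rw [← altProd_comp_perm, hcycle]
  rw [hsign, mul_smul_comm, mul_altProd_cons (g := removeNth i f) fun b => hf _ (succAbove_ne i b),
    smul_mul_assoc, smul_comm]

end AltProd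

section Weyl

variable (k : Type*) [CommRing k] {n : ℕ}

lemma VnX_mul_add_mul_of_lt (a : Fin n → Fin n → k) {i j : Fin n} (h : i < j) :
    VnX k n a i * VnX k n a j + VnX k n a j * VnX k n a i = algebraMap k (Vn k n a) (a i j) := by
  have hrel := RingQuot.mkAlgHom_rel k (VnRel.rel (k := k) (a := a) i j h)
  rwa [map_add, map_mul, map_mul, AlgHom.commutes] at hrel

lemma VnX_mul_add_mul_of_ne {i j : Fin n} (h : i ≠ j) :
    VnX k n (fun _ _ => 1) i * VnX k n (fun _ _ => 1) j
      + VnX k n (fun _ _ => 1) j * VnX k n (fun _ _ => 1) i = 1 := by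
  rcases h.lt_or_gt with h | h
  · rw [VnX_mul_add_mul_of_lt k _ h, map_one]
  · rw [add_comm, VnX_mul_add_mul_of_lt k _ h, map_one]

lemma Vn.commute_of_forall_commute_VnX (a : Fin n → Fin n → k) {u : Vn k n a}
    (h : ∀ i, Commute u (VnX k n a i)) (v : Vn k n a) : Commute u v := by
  obtain ⟨w, rfl⟩ := RingQuot.mkAlgHom_surjective k (VnRel k n a) v
  induction w using FreeAlgebra.induction with
  | grade0 r => rw [AlgHom.commutes]; exact Algebra.commute_algebraMap_right r u
  | grade1 x => exact h x
  | mul _ _ hv hw => rw [map_mul]; exact hv.mul_right hw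
  | add _ _ hv hw => rw [map_add]; exact hv.add_right hw

lemma WnOmega_eq_altProd : WnOmega k n = altProd (VnX k n fun _ _ => 1) := rfl

end Weyl

theorem Wn_omega_commutation_general (k : Type*) [CommRing k] (n : ℕ) :
    (∀ i : Fin n, VnX k n (fun _ _ => 1) i * WnOmega k n =
      (-1 : Vn k n (fun _ _ => 1)) ^ (n - 1) * (WnOmega k n * VnX k n (fun _ _ => 1) i)) ∧
    (Odd n → ∀ v : Vn k n (fun _ _ => 1), WnOmega k n * v = v * WnOmega k n) := by
  have hx : ∀ i : Fin n, VnX k n (fun _ _ => 1) i * WnOmega k n =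
      (-1 : Vn k n (fun _ _ => 1)) ^ (n - 1) * (WnOmega k n * VnX k n (fun _ _ => 1) i) := by
    intro i
    obtain _ | m := n
    · exact i.elim0
    · rw [WnOmega_eq_altProd, Nat.add_sub_cancel, mul_altProd_of_anticomm_of_ne
        fun j hj => VnX_mul_add_mul_of_ne k (Ne.symm hj), zsmul_eq_mul]
      push_cast
      rfl
  refine ⟨hx, fun hn v => Vn.commute_of_forall_commute_VnX k _ (fun i => ?_) v⟩
  have hsign : (-1 : Vn k n fun _ _ => 1) ^ (n - 1) = 1 :=
    Even.neg_one_pow (α := Vn k n fun _ _ => 1) (Nat.Odd.sub_odd hn odd_one)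
  rw [Commute, SemiconjBy, hx, hsign, one_mul]

/-- in `W_n` over a commutative domain `k` (any characteristic), the
antisymmetrized product `Ωₙ` satisfies `xᵢ Ωₙ = (-1)^(n-1) Ωₙ xᵢ` for all `i`; in
particular, if `n` is odd then `Ωₙ` is central in `W_n`. -/
theorem Wn_omega_commutation (k : Type*) [CommRing k] [IsDomain k] (n : ℕ) :
    (∀ i : Fin n, VnX k n (fun _ _ => 1) i * WnOmega k n =
      (-1 : Vn k n (fun _ _ => 1)) ^ (n - 1) * (WnOmega k n * VnX k n (fun _ _ => 1) i)) ∧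
    (Odd n → ∀ v : Vn k n (fun _ _ => 1), WnOmega k n * v = v * WnOmega k n) :=
  Wn_omega_commutation_general k n
end
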